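/- Let D = ω_n⋯ω_1ω_0 be a semi-standard decomposition of u ∈ Y_{z,y} (with data y^{(i)}, J^{(i)} for 0 ≤ i ≤ n+1), and let 0 ≤ i_1 < i_2 < ⋯ < i_k ≤ n be exactly those indices i with [y^{(i+1)}] = [y^{(i)}] and J^{(i+1)} = J^{(i)}. Let D̂ = ω_{σ(n−k)}⋯ω_{σ(1)}ω_{σ(0)} be the expression obtained from D by deleting all factors ω_{i_j} (1 ≤ j ≤ k), where σ : {0,1,…,n−k} → {0,1,…,n} is the corresponding index map, and let û be the element of W expressed by D̂. Then there exists ẑ ∈ S^{(Λ)} with [ẑ] = [z] such that û ∈ Y_{ẑ,y}; D̂ is a semi-standard decomposition of û with respect to J^{(0)}(D̂) = J^{(0)}(D); J^{(n−k+1):}(D̂) = J^{(n+1)}(D); and for each 0 ≤ j ≤ n−k one has [y^{(j)}(D̂)] = [y^{(σ(j))}(D)], [y^{(j+1)}(D̂)] = [y^{(σ(j)+1)}(D)], J^{(j)}(D̂) = J^{(σ(j))}(D), and J^{(j+1)}(D̂) = J^{(σ(j)+1)}(D). -/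

import Mathlib

open scoped Classical Pointwise

noncomputable section

namespace CoxeterCentralizer

/-- The geometric representation space `V`: formal `ℝ`-linear combinations of
the simple roots `α_s`, `s ∈ S`. -/
abbrev GV (S : Type*) := S →₀ ℝ

variable {S W : Type*} [Group W]

/-- The simple root `α_s`. -/
def alpha (s : S) : GV S := Finsupp.single s 1

/-- The value `⟨α_s, α_t⟩ = - cos (π / m(s,t))` of the bilinear form on simple roots
(`m(s,t) = 0` encodes `m(s,t) = ∞`, where the value is `-1`). -/
def cform (M : CoxeterMatrix S) (s t : S) : ℝ :=
  if M s t = 0 then -1 else -Real.cos (Real.pi / (M s t : ℝ))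

/-- The symmetric bilinear form `⟨·,·⟩` on the geometric representation space. -/
def form (M : CoxeterMatrix S) (v w : GV S) : ℝ :=
  v.sum fun s a => w.sum fun t b => a * b * cform M s t

/-- The property that a given action of `W` on `V` is the standard geometric
representation: each simple reflection acts by `s • v = v - 2⟨α_s, v⟩ α_s`. -/
def GeomAction (M : CoxeterMatrix S) (cs : CoxeterSystem M W) [MulAction W (GV S)] : Prop :=
  ∀ (s : S) (v : GV S), cs.simple s • v = v - (2 * form M (alpha s) v) • alpha s

/-- The root system `Φ = W · Π`. -/
def Phi (M : CoxeterMatrix S) (cs : CoxeterSystem M W) [MulAction W (GV S)] : Set (GV S) :=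
  {v | ∃ (w : W) (s : S), v = w • alpha s}

/-- The set of positive roots `Φ⁺ = Φ ∩ ℝ_{≥0} Π`. -/
def PhiPos (M : CoxeterMatrix S) (cs : CoxeterSystem M W) [MulAction W (GV S)] : Set (GV S) :=
  {v ∈ Phi M cs | ∀ s, 0 ≤ v s}

/-- `Φ_J`, the roots supported on `J`. -/
def PhiIn (M : CoxeterMatrix S) (cs : CoxeterSystem M W) [MulAction W (GV S)]
    (J : Set S) : Set (GV S) :=
  {v ∈ Phi M cs | ∀ s, s ∉ J → v s = 0}

/-- `Φ_J^{⊥K}`, the roots supported on `J` orthogonal to all `α_s`, `s ∈ K`. -/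
def PhiPerp (M : CoxeterMatrix S) (cs : CoxeterSystem M W) [MulAction W (GV S)]
    (J K : Set S) : Set (GV S) :=
  {v ∈ PhiIn M cs J | ∀ s ∈ K, form M v (alpha s) = 0}

/-- The reflection `s_γ = w s w⁻¹` along a root `γ = w • α_s`. -/
def sref (M : CoxeterMatrix S) (cs : CoxeterSystem M W) [MulAction W (GV S)]
    (γ : GV S) : W :=
  if h : ∃ (w : W) (s : S), γ = w • alpha s then
    h.choose * cs.simple h.choose_spec.choose * h.choose⁻¹
  else 1

/-- The (standard) parabolic subgroup `W_I`. -/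
def WP (M : CoxeterMatrix S) (cs : CoxeterSystem M W) (I : Set S) : Subgroup W :=
  Subgroup.closure (cs.simple '' I)

/-- `I ⊆ S` is of finite type if `W_I` is finite. -/
def FiniteType (M : CoxeterMatrix S) (cs : CoxeterSystem M W) (I : Set S) : Prop :=
  (WP M cs I : Set W).Finite

/-- Adjacency in the Coxeter graph: `s` and `t` are joined by an edge iff `m(s,t) ≥ 3`
(including `m(s,t) = ∞`, encoded as `0`). -/
def Adj (M : CoxeterMatrix S) (s t : S) : Prop := 3 ≤ M s t ∨ M s t = 0

/-- `J` is adjacent to `K` if some element of `J` is joined by an edge to some element of `K`. -/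
def AdjSets (M : CoxeterMatrix S) (J K : Set S) : Prop := ∃ s ∈ J, ∃ t ∈ K, Adj M s t

/-- `J` is apart from `K` if they are disjoint and not adjacent. -/
def Apart (M : CoxeterMatrix S) (J K : Set S) : Prop := J ∩ K = ∅ ∧ ¬ AdjSets M J K

/-- Connectivity within `C ⊆ S` in the Coxeter graph. -/
def ConnIn (M : CoxeterMatrix S) (C : Set S) (s t : S) : Prop :=
  Relation.ReflTransGen (fun a b => b ∈ C ∧ Adj M a b) s t

/-- `C ⊆ S` is irreducible: nonempty and its induced Coxeter graph is connected. -/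
def IsIrreducible (M : CoxeterMatrix S) (C : Set S) : Prop :=
  C.Nonempty ∧ ∀ s ∈ C, ∀ t ∈ C, ConnIn M C s t

/-- `D` is an irreducible component of `C`: a connected component of the Coxeter
graph induced on `C`. -/
def IsComponent (M : CoxeterMatrix S) (C D : Set S) : Prop :=
  ∃ s ∈ C, D = {t ∈ C | ConnIn M C s t}

/-- The Coxeter matrix of type `A_n` (standard labelling, `0`-indexed). -/
def AMat (n : ℕ) : Fin n → Fin n → ℕ := fun i j =>
  if i = j then 1 else if i.1 + 1 = j.1 ∨ j.1 + 1 = i.1 then 3 else 2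

/-- `C ⊆ S` is of the type given by the labelled Coxeter matrix `A` on `Fin n`. -/
def IsGraphType (M : CoxeterMatrix S) {n : ℕ} (A : Fin n → Fin n → ℕ) (C : Set S) : Prop :=
  ∃ r : Fin n → S, Function.Injective r ∧ C = Set.range r ∧ ∀ i j, M (r i) (r j) = A i j

/-- `I` is `A_{>1}`-free: it has no irreducible component of type `A_n`, `2 ≤ n < ∞`. -/
def AFree (M : CoxeterMatrix S) (I : Set S) : Prop :=
  ∀ C, IsComponent M I C → ∀ n, 2 ≤ n → ¬ IsGraphType M (AMat n) C

/-- The reflection subgroup `W(Ψ)` generated by the reflections along the roots in `Ψ`. -/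
def WRefl (M : CoxeterMatrix S) (cs : CoxeterSystem M W) [MulAction W (GV S)]
    (Ψ : Set (GV S)) : Subgroup W :=
  Subgroup.closure (sref M cs '' Ψ)

/-- The "root system" `W(Ψ) · Ψ` of the reflection subgroup `W(Ψ)`. -/
def orb (M : CoxeterMatrix S) (cs : CoxeterSystem M W) [MulAction W (GV S)]
    (Ψ : Set (GV S)) : Set (GV S) :=
  {v | ∃ w ∈ WRefl M cs Ψ, ∃ γ ∈ Ψ, v = w • γ}

/-- The positive part `(W(Ψ) · Ψ)⁺` of the root system of `W(Ψ)`. -/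
def orbPos (M : CoxeterMatrix S) (cs : CoxeterSystem M W) [MulAction W (GV S)]
    (Ψ : Set (GV S)) : Set (GV S) :=
  {v ∈ orb M cs Ψ | ∀ s, 0 ≤ v s}

/-- The simple system `Π(Ψ)` of the reflection subgroup `W(Ψ)`: those
`γ ∈ (W(Ψ)·Ψ)⁺` such that any expression `γ = Σ c_i • β_i` with `c_i > 0` and
`β_i ∈ (W(Ψ)·Ψ)⁺` forces `β_i = γ` for all `i`. -/
def simpleSys (M : CoxeterMatrix S) (cs : CoxeterSystem M W) [MulAction W (GV S)]
    (Ψ : Set (GV S)) : Set (GV S) :=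
  {γ ∈ orbPos M cs Ψ |
    ∀ (n : ℕ) (c : Fin n → ℝ) (β : Fin n → GV S),
      (∀ i, 0 < c i) → (∀ i, β i ∈ orbPos M cs Ψ) → γ = ∑ i, c i • β i →
      ∀ i, β i = γ}

/-- The simple system `Π^{J,K} = Π(Φ_J^{⊥K})`. -/
def PiPerp (M : CoxeterMatrix S) (cs : CoxeterSystem M W) [MulAction W (GV S)]
    (J K : Set S) : Set (GV S) :=
  simpleSys M cs (PhiPerp M cs J K)

/-- The simple system `Π^I = Π(Φ^{⊥I})` of `W^{⊥I}`. -/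
def PiI (M : CoxeterMatrix S) (cs : CoxeterSystem M W) [MulAction W (GV S)]
    (I : Set S) : Set (GV S) :=
  PiPerp M cs Set.univ I

/-- The subgroup `C_I = {w ∈ W : w • α_s = α_s for all s ∈ I}` (as a set). -/
def CIset (M : CoxeterMatrix S) (cs : CoxeterSystem M W) [MulAction W (GV S)]
    (I : Set S) : Set W :=
  {w : W | ∀ s ∈ I, w • alpha s = alpha s}

/-- The subgroup `Y_I = {w ∈ C_I : w • (Φ^{⊥I})⁺ ⊆ Φ⁺}` (as a set). -/
def YIset (M : CoxeterMatrix S) (cs : CoxeterSystem M W) [MulAction W (GV S)]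
    (I : Set S) : Set W :=
  {w ∈ CIset M cs I |
    ∀ γ ∈ PhiPerp M cs Set.univ I ∩ PhiPos M cs, w • γ ∈ PhiPos M cs}

/-- Adjacency of two simple roots of a reflection subgroup, in the Coxeter graph of the
reflection subgroup: the corresponding reflections do not commute. -/
def RootAdj (M : CoxeterMatrix S) (cs : CoxeterSystem M W) [MulAction W (GV S)]
    (β β' : GV S) : Prop :=
  β ≠ β' ∧ sref M cs β * sref M cs β' ≠ sref M cs β' * sref M cs β

/-- Connectivity within a set `P` of roots in the Coxeter graph of the reflection
subgroup generated by the reflections along roots in `P`. -/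
def RootConnIn (M : CoxeterMatrix S) (cs : CoxeterSystem M W) [MulAction W (GV S)]
    (P : Set (GV S)) (β β' : GV S) : Prop :=
  Relation.ReflTransGen (fun a b => b ∈ P ∧ RootAdj M cs a b) β β'

/-- The irreducible component of the simple system `P` containing the root `β`. -/
def RootComp (M : CoxeterMatrix S) (cs : CoxeterSystem M W) [MulAction W (GV S)]
    (P : Set (GV S)) (β : GV S) : Set (GV S) :=
  {β' ∈ P | RootConnIn M cs P β β'}

/-- `C` is an irreducible component of the simple system `P`. -/
def IsRootComponent (M : CoxeterMatrix S) (cs : CoxeterSystem M W) [MulAction W (GV S)]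
    (P C : Set (GV S)) : Prop :=
  ∃ β ∈ P, C = RootComp M cs P β

/-- The finite part `W^{⊥I}_fin` of the Coxeter system `(W^{⊥I}, R^I)`:
the subgroup generated by the finite irreducible components of `W^{⊥I}`. -/
def PerpFin (M : CoxeterMatrix S) (cs : CoxeterSystem M W) [MulAction W (GV S)]
    (I : Set S) : Subgroup W :=
  Subgroup.closure (sref M cs ''
    {β ∈ PiI M cs I | ((WRefl M cs (RootComp M cs (PiI M cs I) β) : Set W)).Finite})

/-- The infinite part `W^{⊥I}_inf` of the Coxeter system `(W^{⊥I}, R^I)`: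
the subgroup generated by the infinite irreducible components of `W^{⊥I}`. -/
def PerpInf (M : CoxeterMatrix S) (cs : CoxeterSystem M W) [MulAction W (GV S)]
    (I : Set S) : Subgroup W :=
  Subgroup.closure (sref M cs ''
    {β ∈ PiI M cs I | ¬ ((WRefl M cs (RootComp M cs (PiI M cs I) β) : Set W)).Finite})

/-- `Π_J`, the set of simple roots with index in `J`. -/
def alphaSet (J : Set S) : Set (GV S) := alpha '' J

/-- `P` is a basis of the span of `T`. -/
def IsBasisOfSpan (P T : Set (GV S)) : Prop :=
  LinearIndependent ℝ (fun v : ↥P => (v : GV S)) ∧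
    Submodule.span ℝ P = Submodule.span ℝ T

/-- The longest element `w_0(L)` of a finite parabolic subgroup `W_L`. -/
def w0 (M : CoxeterMatrix S) (cs : CoxeterSystem M W) (L : Set S) : W :=
  if h : ∃ w ∈ WP M cs L, ∀ u ∈ WP M cs L, cs.length u ≤ cs.length w then h.choose else 1

/-- `J_{∼K}`: the set of elements of `J ∪ K` lying in the same connected component of the
Coxeter graph induced on `J ∪ K` as some element of `K`. -/
def sTilde (M : CoxeterMatrix S) (J K : Set S) : Set S :=
  {s ∈ J ∪ K | ∃ t ∈ K, ConnIn M (J ∪ K) t s}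

/-- `S^{(Λ)}`: the set of injective maps (duplicate-free `Λ`-tuples) `Λ → S`. -/
def SInj (S Λ : Type*) := {x : Λ → S // Function.Injective x}

/-- `[x]`: the image of the tuple `x ∈ S^{(Λ)}`. -/
def rng {S Λ : Type*} (x : SInj S Λ) : Set S := Set.range x.1

/-- `C_{x,y} = {w ∈ W : α_{x_λ} = w • α_{y_λ} for all λ}`. -/
def Cpair (M : CoxeterMatrix S) (cs : CoxeterSystem M W) [MulAction W (GV S)]
    {Λ : Type*} (x y : SInj S Λ) : Set W :=
  {w : W | ∀ l : Λ, w • alpha (y.1 l) = alpha (x.1 l)}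

/-- `Y_{x,y} = {w ∈ C_{x,y} : w • (Φ^{⊥[y]})⁺ ⊆ Φ⁺}`. -/
def Ypair (M : CoxeterMatrix S) (cs : CoxeterSystem M W) [MulAction W (GV S)]
    {Λ : Type*} (x y : SInj S Λ) : Set W :=
  {w ∈ Cpair M cs x y |
    ∀ γ ∈ PhiPerp M cs Set.univ (rng y) ∩ PhiPos M cs, w • γ ∈ PhiPos M cs}

/-- A semi-standard decomposition `u = ω_{n-1} ⋯ ω_1 ω_0` of an element `u ∈ Y_{z,y}`
with respect to `J ⊆ S`, with data `y^{(i)}`, `t^{(i)}`, `J^{(i)}`, supports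
`K^{(i)} = ([y^{(i)}] ∪ J^{(i)})_{∼ t^{(i)}}` and
`ω_i = w_0(K^{(i)}) w_0(K^{(i)} ∖ {t^{(i)}})`. -/
structure SemiStd {S W : Type*} [Group W] (M : CoxeterMatrix S) (cs : CoxeterSystem M W)
    [MulAction W (GV S)] (Λ : Type*) (u : W) (y z : SInj S Λ) (J : Set S) where
  n : ℕ
  ys : Fin (n + 1) → SInj S Λ
  ts : Fin n → S
  Js : Fin (n + 1) → Set S
  Ks : Fin n → Set S
  om : Fin n → W
  h_y0 : ys 0 = y
  h_yn : ys (Fin.last n) = z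
  h_J0 : Js 0 = J
  h_K : ∀ i, Ks i = sTilde M (rng (ys i.castSucc) ∪ Js i.castSucc) {ts i}
  h_om : ∀ i, om i = w0 M cs (Ks i) * w0 M cs (Ks i \ {ts i})
  h_t_notin : ∀ i, ts i ∉ rng (ys i.castSucc) ∪ Js i.castSucc
  h_t_adj : ∀ i, AdjSets M {ts i} (rng (ys i.castSucc))
  h_K_fin : ∀ i, FiniteType M cs (Ks i)
  h_Y : ∀ i, om i ∈ Ypair M cs (ys i.succ) (ys i.castSucc)
  h_J_map : ∀ i, (fun v => om i • v) '' alphaSet (Js i.castSucc) = alphaSet (Js i.succ)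
  h_prod : u = (List.ofFn om).reverse.prod

variable {Λ : Type*} {M : CoxeterMatrix S} {cs : CoxeterSystem M W} [MulAction W (GV S)]

/-- `ω_i` is a wide transformation: its support intersects `J^{(i)} ∖ [y^{(i)}]`. -/
def SemiStd.Wide {u : W} {y z : SInj S Λ} {J : Set S} (D : SemiStd M cs Λ u y z J)
    (i : Fin D.n) : Prop :=
  (D.Ks i ∩ (D.Js i.castSucc \ rng (D.ys i.castSucc))).Nonempty

/-- A semi-standard decomposition is standard if the lengths add up:
`ℓ(u) = Σ_j ℓ(ω_j)`. -/
def SemiStd.IsStd {u : W} {y z : SInj S Λ} {J : Set S} (D : SemiStd M cs Λ u y z J) : Prop :=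
  cs.length u = ∑ i : Fin D.n, cs.length (D.om i)

/-!
A deleted factor `ω_i` leaves `[y^{(i)}]` and `J^{(i)}` unchanged, so this data is constant
along every run of deleted factors, and the surviving factors still satisfy all conditions of a
semi-standard decomposition except for the tuples themselves: a deleted `ω_i` may permute the
entries of `y^{(i)}`. Since `w ∈ Y_{x,y}` survives relabelling `y` (relabelling `x` along), the
tuples can be rebuilt step by step. That the product `û` lies in `Y_{ẑ,y}` is the closure of `Y` under composition, which rests
on the `W`-invariance of the bilinear form.
-/

lemma form_symm (v w : GV S) : form M v w = form M w v := by
  rw [form, form, Finsupp.sum_comm]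
  congr 1; funext s a; congr 1; funext t b
  rw [cform, cform, M.symmetric]; ring

lemma form_add_left (v₁ v₂ w : GV S) :
    form M (v₁ + v₂) w = form M v₁ w + form M v₂ w := by
  rw [form, form, form, Finsupp.sum_add_index' (by simp)]
  intro s a₁ a₂
  rw [← Finsupp.sum_add]
  congr 1; funext t b; ring

lemma form_smul_left (c : ℝ) (v w : GV S) : form M (c • v) w = c * form M v w := by
  rw [form, form, Finsupp.sum_smul_index (by simp), Finsupp.mul_sum]
  congr 1; funext s a
  rw [Finsupp.mul_sum]
  congr 1; funext t b; ring

variable (M) in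
def formBilin : LinearMap.BilinForm ℝ (GV S) :=
  LinearMap.mk₂ ℝ (form M) form_add_left
    (fun c v w => by rw [form_smul_left, smul_eq_mul])
    (fun v w₁ w₂ => by rw [form_symm, form_add_left, form_symm w₁, form_symm w₂])
    (fun c v w => by rw [form_symm, form_smul_left, form_symm, smul_eq_mul])

lemma form_alpha_self (s : S) : form M (alpha s) (alpha s) = 1 := by
  simp [form, alpha, cform]

lemma form_simple_smul (hact : GeomAction M cs) (s : S) (v w : GV S) :
    form M (cs.simple s • v) (cs.simple s • w) = form M v w := by
  rw [hact, hact]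
  have h : ∀ a b, formBilin M a b = form M a b := fun _ _ => rfl
  simp only [← h, map_sub, map_smul, LinearMap.sub_apply, LinearMap.smul_apply, smul_eq_mul]
  simp only [h, form_alpha_self, form_symm v (alpha s)]
  ring

lemma form_smul (hact : GeomAction M cs) (w : W) (v v' : GV S) :
    form M (w • v) (w • v') = form M v v' := by
  obtain ⟨ω, rfl⟩ := cs.wordProd_surjective w
  induction ω generalizing v v' with
  | nil => simp
  | cons i ω ih => rw [cs.wordProd_cons, mul_smul, mul_smul, form_simple_smul hact, ih]

lemma one_mem_Ypair (a : SInj S Λ) : (1 : W) ∈ Ypair M cs a a :=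
  ⟨fun _ => one_smul _ _, fun γ hγ => by rw [one_smul]; exact hγ.2⟩

lemma mul_mem_Ypair (hact : GeomAction M cs) {a b c : SInj S Λ} {w₁ w₂ : W}
    (h₁ : w₁ ∈ Ypair M cs b a) (h₂ : w₂ ∈ Ypair M cs c b) :
    w₂ * w₁ ∈ Ypair M cs c a := by
  obtain ⟨hC₁, hpos₁⟩ := h₁
  obtain ⟨hC₂, hpos₂⟩ := h₂
  refine ⟨fun l => by rw [mul_smul, hC₁ l, hC₂ l], fun γ hγ => ?_⟩
  have hpos := hpos₁ γ hγ
  obtain ⟨⟨⟨⟨v, s, rfl⟩, -⟩, horth⟩, -⟩ := hγ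
  rw [mul_smul]
  refine hpos₂ _
    ⟨⟨⟨⟨w₁ * v, s, (mul_smul _ _ _).symm⟩, fun _ h => (h ⟨⟩).elim⟩, ?_⟩, hpos⟩
  rintro _ ⟨l, rfl⟩
  rw [← hC₁ l, form_smul hact]
  exact horth _ ⟨l, rfl⟩

lemma prod_mem_Ypair (hact : GeomAction M cs) {m : ℕ} (ys : Fin (m + 1) → SInj S Λ)
    (g : Fin m → W) (hg : ∀ i, g i ∈ Ypair M cs (ys i.succ) (ys i.castSucc)) :
    (List.ofFn g).reverse.prod ∈ Ypair M cs (ys (Fin.last m)) (ys 0) := by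
  induction m with
  | zero => simpa using one_mem_Ypair (ys 0)
  | succ m ih =>
    have htail := ih (fun j => ys j.succ) (fun j => g j.succ) fun i => by
      simpa only [Fin.succ_castSucc] using hg i.succ
    rw [List.ofFn_succ, List.reverse_cons, List.prod_append, List.prod_singleton]
    exact mul_mem_Ypair hact (hg 0) htail

lemma SemiStd.mem_Ypair (hact : GeomAction M cs) {u : W} {y z : SInj S Λ} {J : Set S}
    (D : SemiStd M cs Λ u y z J) : u ∈ Ypair M cs z y := by
  have h := prod_mem_Ypair hact D.ys D.om D.h_Y
  rwa [D.h_y0, D.h_yn, ← D.h_prod] at h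

lemma exists_mem_Ypair_of_rng_eq {w : W} {a b a' : SInj S Λ} (hw : w ∈ Ypair M cs b a)
    (ha : rng a' = rng a) : ∃ b', rng b' = rng b ∧ w ∈ Ypair M cs b' a' := by
  choose π hπ using fun l => (ha ▸ ⟨l, rfl⟩ : a'.1 l ∈ rng a)
  have hπ_inj : Function.Injective π := fun l₁ l₂ h => a'.2 (by rw [← hπ, ← hπ, h])
  refine ⟨⟨b.1 ∘ π, b.2.comp hπ_inj⟩, ?_, fun l => ?_, ?_⟩
  · refine Set.Subset.antisymm (Set.range_comp_subset_range π b.1) ?_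
    rintro _ ⟨μ, rfl⟩
    obtain ⟨l, hl⟩ : a.1 μ ∈ rng a' := ha ▸ ⟨μ, rfl⟩
    exact ⟨l, congrArg b.1 (a.2 ((hπ l).trans hl))⟩
  · rw [← hπ]
    exact hw.1 (π l)
  · rw [ha]
    exact hw.2

lemma exists_fin_chain {α : Type*} {m : ℕ} (P : Fin (m + 1) → α → Prop)
    (R : Fin m → α → α → Prop) {a : α} (ha : P 0 a)
    (hR : ∀ i x, P i.castSucc x → ∃ x', P i.succ x' ∧ R i x x') :
    ∃ f : Fin (m + 1) → α,
      f 0 = a ∧ (∀ i, P i (f i)) ∧ ∀ i, R i (f i.castSucc) (f i.succ) := by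
  induction m generalizing a with
  | zero =>
    exact ⟨fun _ => a, rfl, fun i => Fin.subsingleton_one.elim 0 i ▸ ha, fun i => i.elim0⟩
  | succ m ih =>
    obtain ⟨a₁, ha₁, hR₀⟩ := hR 0 a ha
    obtain ⟨f, hf₀, hP, hRf⟩ := ih (fun i => P i.succ) (fun i => R i.succ) ha₁
      fun i x hx => hR i.succ x hx
    refine ⟨Fin.cons a f, rfl, Fin.cases ha hP, Fin.cases ?_ fun i => hRf i⟩
    simpa [hf₀] using hR₀

lemma apply_eq_apply_of_succ_eq {α : Type*} {n : ℕ} (f : Fin (n + 1) → α)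
    {a b : Fin (n + 1)} (hab : a ≤ b)
    (hf : ∀ i : Fin n, a ≤ i.castSucc → i.succ ≤ b → f i.succ = f i.castSucc) :
    f a = f b := by
  induction b using Fin.induction with
  | zero => rw [Fin.le_zero_iff.mp hab]
  | succ i ih =>
    rcases hab.lt_or_eq with hlt | rfl
    · have ha : a ≤ i.castSucc := Fin.le_castSucc_iff.mpr hlt
      rw [ih ha fun j h₁ h₂ => hf j h₁ (h₂.trans i.castSucc_le_succ), hf i ha le_rfl]
    · rfl

-- The position in `D` of the `j`-th factor of the subexpression `σ`, and `n` for `j = m`.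
def survIdx {m n : ℕ} (σ : Fin m → Fin n) : Fin (m + 1) → Fin (n + 1) :=
  Fin.lastCases (Fin.last n) fun j => (σ j).castSucc

section survIdx

variable {m n : ℕ} {σ : Fin m → Fin n}

@[simp] lemma survIdx_last : survIdx σ (Fin.last m) = Fin.last n := Fin.lastCases_last

@[simp] lemma survIdx_castSucc (j : Fin m) : survIdx σ j.castSucc = (σ j).castSucc :=
  Fin.lastCases_castSucc _

lemma castSucc_lt_survIdx_iff (hσ : StrictMono σ) (i : Fin m) (j : Fin (m + 1)) :
    (σ i).castSucc < survIdx σ j ↔ i.castSucc < j := by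
  induction j using Fin.lastCases with
  | last => simp [Fin.castSucc_lt_last]
  | cast j => simp [hσ.lt_iff_lt]

variable {α : Type*} {f : Fin (n + 1) → α}

lemma apply_zero_eq_apply_survIdx (hσ : StrictMono σ)
    (hf : ∀ i ∉ Set.range σ, f i.succ = f i.castSucc) : f 0 = f (survIdx σ 0) := by
  refine apply_eq_apply_of_succ_eq f (Fin.zero_le _) fun i _ hi => hf i ?_
  rintro ⟨i, rfl⟩
  exact Fin.not_lt_zero _ ((castSucc_lt_survIdx_iff hσ i 0).mp
    ((σ i).castSucc_lt_succ.trans_le hi))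

lemma apply_succ_eq_apply_survIdx (hσ : StrictMono σ)
    (hf : ∀ i ∉ Set.range σ, f i.succ = f i.castSucc) (j : Fin m) :
    f (σ j).succ = f (survIdx σ j.succ) := by
  refine apply_eq_apply_of_succ_eq f ?_ fun i h₁ h₂ => hf i ?_
  · rw [← Fin.castSucc_lt_iff_succ_le, castSucc_lt_survIdx_iff hσ]
    exact j.castSucc_lt_succ
  · rintro ⟨i, rfl⟩
    have hji : j < i := hσ.lt_iff_lt.mp (Fin.succ_le_castSucc_iff.mp h₁)
    have hij : i.castSucc < j.succ :=
      (castSucc_lt_survIdx_iff hσ i _).mp ((σ i).castSucc_lt_succ.trans_le h₂)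
    exact absurd hji (not_lt.mpr (Fin.castSucc_lt_succ_iff.mp hij))

end survIdx

/-- **Simplification of a semi-standard decomposition.** Deleting from a semi-standard
decomposition `D = ω_n ⋯ ω_1 ω_0` of `u ∈ Y_{z,y}` exactly those factors `ω_i` with
`[y^{(i+1)}] = [y^{(i)}]` and `J^{(i+1)} = J^{(i)}` yields (via the order-preserving
index map `σ`) an element `û ∈ Y_{ẑ,y}` with `[ẑ] = [z]`, and the resulting expression
is a semi-standard decomposition of `û` with respect to `J` whose data matches that of
`D` along `σ` as stated. -/
theorem simplification_semistandard {S W : Type*} [Group W] (M : CoxeterMatrix S)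
    (cs : CoxeterSystem M W) [MulAction W (GV S)] (hact : GeomAction M cs) {Λ : Type*}
    {u : W} {y z : SInj S Λ} {J : Set S} (D : SemiStd M cs Λ u y z J)
    (del : Fin D.n → Prop)
    (hdel : ∀ i, del i ↔
      (rng (D.ys i.succ) = rng (D.ys i.castSucc) ∧ D.Js i.succ = D.Js i.castSucc))
    (k : ℕ)
    (σ : Fin (D.n - k) → Fin D.n) (hσmono : StrictMono σ)
    (hσrange : Set.range σ = {i | ¬ del i})
    (uhat : W) (huhat : uhat = (List.ofFn fun j => D.om (σ j)).reverse.prod) :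
    ∃ zhat : SInj S Λ, rng zhat = rng z ∧ uhat ∈ Ypair M cs zhat y ∧
    ∃ E : SemiStd M cs Λ uhat y zhat J, ∃ hEn : E.n = D.n - k,
      (∀ j : Fin (D.n - k),
        E.om (Fin.cast hEn.symm j) = D.om (σ j) ∧
        rng (E.ys (Fin.cast (by omega) j.castSucc)) = rng (D.ys (σ j).castSucc) ∧
        rng (E.ys (Fin.cast (by omega) j.succ)) = rng (D.ys (σ j).succ) ∧
        E.Js (Fin.cast (by omega) j.castSucc) = D.Js (σ j).castSucc ∧
        E.Js (Fin.cast (by omega) j.succ) = D.Js (σ j).succ) ∧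
      E.Js (Fin.last E.n) = D.Js (Fin.last D.n) := by
  let data : Fin (D.n + 1) → Set S × Set S := fun p => (rng (D.ys p), D.Js p)
  have hgap : ∀ i ∉ Set.range σ, data i.succ = data i.castSucc := fun i hi =>
    Prod.ext_iff.mpr ((hdel i).mp (by simpa [hσrange] using hi))
  have h₀ : rng (D.ys 0) = rng (D.ys (survIdx σ 0)) ∧ D.Js 0 = D.Js (survIdx σ 0) :=
    Prod.ext_iff.mp (apply_zero_eq_apply_survIdx hσmono hgap)
  have hsucc (j) : rng (D.ys (σ j).succ) = rng (D.ys (survIdx σ j.succ)) ∧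
      D.Js (σ j).succ = D.Js (survIdx σ j.succ) :=
    Prod.ext_iff.mp (apply_succ_eq_apply_survIdx hσmono hgap j)
  obtain ⟨ys, hys₀, hys, hY⟩ :=
    exists_fin_chain (fun j x => rng x = rng (D.ys (survIdx σ j)))
      (fun i x x' => D.om (σ i) ∈ Ypair M cs x' x) (a := y) (by simpa [D.h_y0] using h₀.1)
      fun i x hx => by
        rw [← (hsucc i).1]
        exact exists_mem_Ypair_of_rng_eq (D.h_Y (σ i)) (by simpa using hx)
  let E : SemiStd M cs Λ uhat y (ys (Fin.last _)) J :=
    { n := D.n - k, ys, ts := fun i => D.ts (σ i), Js := fun j => D.Js (survIdx σ j)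
      Ks := fun i => D.Ks (σ i), om := fun i => D.om (σ i)
      h_y0 := hys₀, h_yn := rfl, h_J0 := by rw [← h₀.2, D.h_J0]
      h_K := fun i => by simpa [hys] using D.h_K (σ i)
      h_om := fun i => D.h_om (σ i)
      h_t_notin := fun i => by simpa [hys] using D.h_t_notin (σ i)
      h_t_adj := fun i => by simpa [hys] using D.h_t_adj (σ i)
      h_K_fin := fun i => D.h_K_fin (σ i)
      h_Y := hY
      h_J_map := fun i => by simpa [← (hsucc i).2] using D.h_J_map (σ i)
      h_prod := huhat }
  refine ⟨ys (Fin.last _), by simp [hys, D.h_yn], E.mem_Ypair hact, E, rfl,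
    fun j => ⟨rfl, by simpa using hys j.castSucc, (hys j.succ).trans (hsucc j).1.symm,
      by simp [E], (hsucc j).2.symm⟩, by simp [E]⟩

end CoxeterCentralizer
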